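/- arXiv:2003.13598 — 2 statements merged into one kernel-verified Lean document; each statement's English description precedes it below -/
import Mathlib

section
/- Let G be a connected bipartite graph with bipartition (A,B), with every vertex in A of degree a ≥ 2 and every vertex in B of degree b ≥ a. If for every pair of edges e, f of G the graphs G − e and G − f are isomorphic, then G is edge-transitive. -/
/-!
Write the two edges as `uv` and `xy` with `u, x ∈ A`, and let `ψ : G - uv ≃g G - xy`. In `G - xy`
the vertices `x` and `y` have degrees `a - 1` and `b - 1` and every other vertex keeps degree `a`
or `b`. Since `ψ` preserves degrees, `ψ u ∈ {x, y}`, and `ψ v ∈ {x, y}` unless `b = a + 1` and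
`ψ v` is a vertex of `A`. That case is impossible: the (at least two) neighbours of `v` in
`G - uv` have degree `a`, whereas all neighbours of `ψ v` but possibly `y` have degree `b`.
Hence `ψ` carries `uv` to `xy`, and so it is an automorphism of `G`.
-/

open MeasureTheory Finset Filter
open scoped Classical

/-- Homomorphism density of a symmetric kernel `h` in a finite graph `G`:
`t_G(h) = ∫_{[0,1]^V} ∏_{{i,j} ∈ E(G)} h(x_i, x_j) dx`. -/
noncomputable def tG {V : Type} [Fintype V] (G : SimpleGraph V) (h : ℝ → ℝ → ℝ)
    (hsym : ∀ a b, h a b = h b a) : ℝ :=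
  ∫ x : V → Set.Icc (0:ℝ) 1,
    ∏ e ∈ G.edgeFinset, Sym2.lift ⟨fun i j => h (x i) (x j), fun _ _ => hsym _ _⟩ e

namespace SimpleGraph

section DeleteEdge

variable {V : Type*} [Fintype V] {G : SimpleGraph V} {u v w : V} {e : Sym2 V}

theorem neighborFinset_deleteEdges_singleton_left :
    (G.deleteEdges {s(u, v)}).neighborFinset u = (G.neighborFinset u).erase v := by
  ext z
  simp only [mem_neighborFinset, deleteEdges_adj, Set.mem_singleton_iff, Sym2.congr_right,
    Finset.mem_erase]
  tauto

theorem degree_deleteEdges_singleton_left (h : G.Adj u v) :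
    (G.deleteEdges {s(u, v)}).degree u = G.degree u - 1 := by
  rw [← card_neighborFinset_eq_degree, ← card_neighborFinset_eq_degree,
    neighborFinset_deleteEdges_singleton_left, Finset.card_erase_of_mem (by simpa using h)]

theorem degree_deleteEdges_singleton_right (h : G.Adj u v) :
    (G.deleteEdges {s(u, v)}).degree v = G.degree v - 1 := by
  rw [Sym2.eq_swap]
  exact degree_deleteEdges_singleton_left h.symm

theorem degree_deleteEdges_singleton_of_notMem (hw : w ∉ e) :
    (G.deleteEdges {e}).degree w = G.degree w := by
  rw [← card_neighborFinset_eq_degree, ← card_neighborFinset_eq_degree]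
  congr 1
  ext z
  simp only [mem_neighborFinset, deleteEdges_adj, Set.mem_singleton_iff, and_iff_left_iff_imp]
  rintro - rfl
  exact hw (Sym2.mem_mk_left w z)

end DeleteEdge

theorem exists_adj_apply_ne_of_one_lt_degree {V W : Type*} {G : SimpleGraph V} {v : V}
    [Fintype (G.neighborSet v)] (hv : 1 < G.degree v) {f : V → W} (hf : Function.Injective f)
    (y : W) :
    ∃ w, G.Adj v w ∧ f w ≠ y := by
  rw [← card_neighborFinset_eq_degree] at hv
  obtain ⟨p, hp, q, hq, hpq⟩ := Finset.one_lt_card.mp hv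
  rw [mem_neighborFinset] at hp hq
  by_cases hpy : f p = y
  · exact ⟨q, hq, fun hqy ↦ hpq (hf (hpy.trans hqy.symm))⟩
  · exact ⟨p, hp, hpy⟩

def Iso.ofDeleteEdgesSingleton {V W : Type*} {G : SimpleGraph V} {H : SimpleGraph W}
    {e : Sym2 V} {f : Sym2 W} (ψ : G.deleteEdges {e} ≃g H.deleteEdges {f})
    (he : e ∈ G.edgeSet) (hf : f ∈ H.edgeSet) (hψ : e.map ψ = f) : G ≃g H where
  toEquiv := ψ.toEquiv
  map_rel_iff' {p q} := by
    by_cases hpq : s(p, q) = e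
    · subst hpq
      rw [← hψ] at hf
      exact iff_of_true hf he
    · have hψpq : s(ψ p, ψ q) ≠ f := fun h ↦
        hpq (Sym2.map.injective ψ.injective (h.trans hψ.symm))
      simpa [hpq, hψpq] using ψ.map_adj_iff (v := p) (w := q)

variable {V : Type*} [Fintype V]

structure IsBiregularBipartition (G : SimpleGraph V) (A B : Set V) (a b : ℕ) : Prop where
  mem_or_mem : ∀ v, v ∈ A ∨ v ∈ B
  disjoint : ∀ v, ¬(v ∈ A ∧ v ∈ B)
  mem_of_adj : ∀ u v, G.Adj u v → (u ∈ A ∧ v ∈ B) ∨ (u ∈ B ∧ v ∈ A)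
  degree_of_mem_left : ∀ u ∈ A, G.degree u = a
  degree_of_mem_right : ∀ v ∈ B, G.degree v = b

namespace IsBiregularBipartition

variable {G : SimpleGraph V} {A B : Set V} {a b : ℕ} {u v w x y z : V}

theorem mem_right_of_adj (hG : G.IsBiregularBipartition A B a b) (h : G.Adj u v) (hu : u ∈ A) :
    v ∈ B :=
  (hG.mem_of_adj u v h).elim And.right fun h' ↦ (hG.disjoint u ⟨hu, h'.1⟩).elim

theorem mem_left_of_adj (hG : G.IsBiregularBipartition A B a b) (h : G.Adj u v) (hu : u ∈ B) :
    v ∈ A :=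
  (hG.mem_of_adj u v h).elim (fun h' ↦ (hG.disjoint u ⟨h'.1, hu⟩).elim) And.right

theorem exists_eq_mk_of_mem_edgeSet (hG : G.IsBiregularBipartition A B a b) {e : Sym2 V}
    (he : e ∈ G.edgeSet) : ∃ u ∈ A, ∃ v, G.Adj u v ∧ e = s(u, v) := by
  induction e using Sym2.ind with
  | _ u v =>
    rcases hG.mem_of_adj u v he with ⟨hu, -⟩ | ⟨-, hv⟩
    · exact ⟨u, hu, v, he, rfl⟩
    · exact ⟨v, hv, u, G.adj_symm he, Sym2.eq_swap⟩

theorem degree_deleteEdges_of_mem_left (hG : G.IsBiregularBipartition A B a b) {e : Sym2 V}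
    (hw : w ∈ A) (hwe : w ∉ e) : (G.deleteEdges {e}).degree w = a := by
  rw [degree_deleteEdges_singleton_of_notMem hwe, hG.degree_of_mem_left w hw]

theorem degree_deleteEdges_of_mem_right (hG : G.IsBiregularBipartition A B a b) {e : Sym2 V}
    (hw : w ∈ B) (hwe : w ∉ e) : (G.deleteEdges {e}).degree w = b := by
  rw [degree_deleteEdges_singleton_of_notMem hwe, hG.degree_of_mem_right w hw]

theorem map_left_mem (hG : G.IsBiregularBipartition A B a b) (ha : 0 < a) (hab : a ≤ b)
    (huv : G.Adj u v) (hu : u ∈ A) {f : Sym2 V}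
    (ψ : G.deleteEdges {s(u, v)} ≃g G.deleteEdges {f}) : ψ u ∈ f := by
  by_contra huf
  have hdeg := ψ.degree_eq u
  rw [degree_deleteEdges_singleton_left huv, hG.degree_of_mem_left u hu] at hdeg
  rcases hG.mem_or_mem (ψ u) with hw | hw
  · rw [hG.degree_deleteEdges_of_mem_left hw huf] at hdeg
    omega
  · rw [hG.degree_deleteEdges_of_mem_right hw huf] at hdeg
    omega

theorem degree_deleteEdges_of_adj_of_mem_right (hG : G.IsBiregularBipartition A B a b)
    (hv : v ∈ B) (hvw : (G.deleteEdges {s(u, v)}).Adj v w) :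
    (G.deleteEdges {s(u, v)}).degree w = a := by
  obtain ⟨hGvw, hvw⟩ := deleteEdges_adj.mp hvw
  refine hG.degree_deleteEdges_of_mem_left (hG.mem_left_of_adj hGvw hv) fun hw ↦ ?_
  rcases Sym2.mem_iff.mp hw with rfl | rfl
  · exact hvw Sym2.eq_swap
  · exact G.irrefl hGvw

theorem degree_deleteEdges_of_adj_of_mem_left (hG : G.IsBiregularBipartition A B a b)
    (hx : x ∈ A) (hw : w ∈ A) (hwz : (G.deleteEdges {s(x, y)}).Adj w z) (hzy : z ≠ y) :
    (G.deleteEdges {s(x, y)}).degree z = b := by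
  have hz := hG.mem_right_of_adj (deleteEdges_adj.mp hwz).1 hw
  refine hG.degree_deleteEdges_of_mem_right hz fun hzxy ↦ ?_
  rcases Sym2.mem_iff.mp hzxy with rfl | rfl
  · exact hG.disjoint z ⟨hx, hz⟩
  · exact hzy rfl

theorem map_right_mem (hG : G.IsBiregularBipartition A B a b) (ha : 2 ≤ a) (hab : a ≤ b)
    (huv : G.Adj u v) (hu : u ∈ A) (hx : x ∈ A)
    (ψ : G.deleteEdges {s(u, v)} ≃g G.deleteEdges {s(x, y)}) : ψ v ∈ s(x, y) := by
  by_contra hvf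
  have hv := hG.mem_right_of_adj huv hu
  have hdeg := ψ.degree_eq v
  have hdv : (G.deleteEdges {s(u, v)}).degree v = b - 1 := by
    rw [degree_deleteEdges_singleton_right huv, hG.degree_of_mem_right v hv]
  rw [hdv] at hdeg
  have hψv : ψ v ∈ A := (hG.mem_or_mem _).resolve_right fun h ↦ by
    rw [hG.degree_deleteEdges_of_mem_right h hvf] at hdeg
    omega
  rw [hG.degree_deleteEdges_of_mem_left hψv hvf] at hdeg
  have hv2 : 1 < (G.deleteEdges {s(u, v)}).degree v := by omega
  obtain ⟨w, hvw, hwy⟩ := exists_adj_apply_ne_of_one_lt_degree hv2 ψ.injective y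
  have hw := hG.degree_deleteEdges_of_adj_of_mem_right hv hvw
  have hψw := hG.degree_deleteEdges_of_adj_of_mem_left hx hψv (ψ.map_adj_iff.mpr hvw) hwy
  rw [ψ.degree_eq w, hw] at hψw
  omega

theorem map_edge_eq (hG : G.IsBiregularBipartition A B a b) (ha : 2 ≤ a) (hab : a ≤ b)
    (huv : G.Adj u v) (hu : u ∈ A) (hx : x ∈ A)
    (ψ : G.deleteEdges {s(u, v)} ≃g G.deleteEdges {s(x, y)}) : s(u, v).map ψ = s(x, y) :=
  ((Sym2.mem_and_mem_iff (ψ.injective.ne huv.ne)).mp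
    ⟨hG.map_left_mem (by omega) hab huv hu ψ, hG.map_right_mem ha hab huv hu hx ψ⟩).symm

end IsBiregularBipartition

end SimpleGraph

theorem edge_transitive_of_deletions_isomorphic_general {V : Type} [Fintype V] (G : SimpleGraph V)
    (A B : Set V)
    (hcover : ∀ v, v ∈ A ∨ v ∈ B) (hdisj : ∀ v, ¬(v ∈ A ∧ v ∈ B))
    (hbip : ∀ u v, G.Adj u v → (u ∈ A ∧ v ∈ B) ∨ (u ∈ B ∧ v ∈ A))
    (a b : ℕ) (ha2 : 2 ≤ a) (hab : a ≤ b)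
    (hdegA : ∀ u ∈ A, G.degree u = a) (hdegB : ∀ v ∈ B, G.degree v = b)
    (hiso : ∀ e ∈ G.edgeSet, ∀ f ∈ G.edgeSet,
      Nonempty (G.deleteEdges {e} ≃g G.deleteEdges {f})) :
    ∀ e ∈ G.edgeSet, ∀ f ∈ G.edgeSet, ∃ φ : G ≃g G, Sym2.map φ e = f := by
  have hG : G.IsBiregularBipartition A B a b := ⟨hcover, hdisj, hbip, hdegA, hdegB⟩
  intro e he f hf
  obtain ⟨ψ⟩ := hiso e he f hf
  obtain ⟨u, hu, v, huv, rfl⟩ := hG.exists_eq_mk_of_mem_edgeSet he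
  obtain ⟨x, hx, y, -, rfl⟩ := hG.exists_eq_mk_of_mem_edgeSet hf
  have hψ := hG.map_edge_eq ha2 hab huv hu hx ψ
  exact ⟨ψ.ofDeleteEdgesSingleton he hf hψ, hψ⟩

/-- if all single-edge deletions of a connected biregular bipartite graph with
minimum degree at least 2 are pairwise isomorphic, then the graph is edge-transitive. -/
theorem edge_transitive_of_deletions_isomorphic {V : Type} [Fintype V] (G : SimpleGraph V)
    (A B : Set V)
    (hcover : ∀ v, v ∈ A ∨ v ∈ B) (hdisj : ∀ v, ¬(v ∈ A ∧ v ∈ B))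
    (hbip : ∀ u v, G.Adj u v → (u ∈ A ∧ v ∈ B) ∨ (u ∈ B ∧ v ∈ A))
    (a b : ℕ) (ha2 : 2 ≤ a) (hab : a ≤ b)
    (hdegA : ∀ u ∈ A, G.degree u = a) (hdegB : ∀ v ∈ B, G.degree v = b)
    (hconn : G.Connected)
    (hiso : ∀ e ∈ G.edgeSet, ∀ f ∈ G.edgeSet,
      Nonempty (G.deleteEdges {e} ≃g G.deleteEdges {f})) :
    ∀ e ∈ G.edgeSet, ∀ f ∈ G.edgeSet, ∃ φ : G ≃g G, Sym2.map φ e = f :=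
  edge_transitive_of_deletions_isomorphic_general G A B hcover hdisj hbip a b ha2 hab hdegA hdegB
    hiso
end

section
/- Suppose G is a finite graph with edges e_1,...,e_k such that t_G(h_1,...,h_k)^k ≤ ∏_{l=1}^k t_G(h_l) for all bounded measurable symmetric nonnegative h_1,...,h_k on [0,1]^2 (i.e., G is weakly norming in Hatami's sense). Then t_{G−e_1}(h) = t_{G−e_2}(h) = ... = t_{G−e_k}(h) for every bounded measurable symmetric nonnegative h on [0,1]^2. -/
/-!
Feed the kernel `g + t` on one edge `e` and `g` on all other edges into the weak-norming
inequality. With `k` the number of edges, for `t ≥ 0` this gives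
`(t_G(g) + t·t_{G-e}(g))^k ≤ t_G(g + t)·t_G(g)^(k-1)`, with equality at `t = 0`, so the
derivatives at `t = 0` compare: `k·t_G(g)^(k-1)·t_{G-e}(g) ≤ t_G(g)^(k-1)·∑_f t_{G-f}(g)`.
When `t_G(g) > 0` this says that no `t_{G-e}(g)` exceeds the average of all of them, so they
are all equal. For a general nonnegative `h`, apply this to `g = h + δ` (whose density is at
least `δ^k`) and let `δ → 0⁺`: densities depend differentiably, hence continuously, on an
additive shift of the kernel.
-/

open MeasureTheory Finset Filter
open scoped Classical

/-- Multilinear homomorphism density: edge `e` carries the symmetric kernel `H e`. -/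
noncomputable def tGm {V : Type} [Fintype V] (G : SimpleGraph V) (H : Sym2 V → ℝ → ℝ → ℝ)
    (hsym : ∀ e a b, H e a b = H e b a) : ℝ :=
  ∫ x : V → Set.Icc (0:ℝ) 1,
    ∏ e ∈ G.edgeFinset, Sym2.lift ⟨fun i j => H e (x i) (x j), fun _ _ => hsym e _ _⟩ e

section ProductIntegral

variable {α ι : Type*} [MeasurableSpace α] {μ : Measure α} [IsFiniteMeasure μ]

theorem integrable_finset_prod_of_abs_le (s : Finset ι) {φ : ι → α → ℝ} {M : ℝ}
    (hφ : ∀ i, Measurable (φ i)) (hM : ∀ i a, |φ i a| ≤ M) :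
    Integrable (fun a => ∏ i ∈ s, φ i a) μ := by
  refine .of_bound (Finset.measurable_prod s fun i _ => hφ i).aestronglyMeasurable (M ^ #s)
    (ae_of_all _ fun a => ?_)
  rw [Real.norm_eq_abs, abs_prod, ← prod_const]
  exact prod_le_prod (fun i _ => abs_nonneg _) fun i _ => hM i a

theorem hasDerivAt_integral_prod_add_mul [DecidableEq ι] (s : Finset ι) (c : ι → ℝ)
    {φ : ι → α → ℝ} {M : ℝ} (hφ : ∀ i, Measurable (φ i)) (hM : ∀ i a, |φ i a| ≤ M) :
    HasDerivAt (fun t => ∫ a, ∏ i ∈ s, (φ i a + t * c i) ∂μ)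
      (∑ i ∈ s, (∫ a, ∏ j ∈ s.erase i, φ j a ∂μ) * c i) 0 := by
  have hderiv : ∀ a t, HasDerivAt (fun t => ∏ i ∈ s, (φ i a + t * c i))
      (∑ i ∈ s, (∏ j ∈ s.erase i, (φ j a + t * c j)) * c i) t := fun a t => by
    simpa using HasDerivAt.fun_finsetProd fun i _ =>
      ((hasDerivAt_id t).mul_const (c i)).const_add (φ i a)
  have hfactor : ∀ a, ∀ t ∈ Metric.ball (0 : ℝ) 1, ∀ j,
      |φ j a + t * c j| ≤ M + |c j| := fun a t ht j => by
    have ht : |t| ≤ 1 := by simpa using (Metric.mem_ball.1 ht).le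
    calc |φ j a + t * c j| ≤ |φ j a| + |t| * |c j| := by
          rw [← abs_mul]; exact abs_add_le _ _
      _ ≤ M + |c j| := add_le_add (hM j a) (mul_le_of_le_one_left (abs_nonneg _) ht)
  have hbound : ∀ a, ∀ t ∈ Metric.ball (0 : ℝ) 1,
      ‖∑ i ∈ s, (∏ j ∈ s.erase i, (φ j a + t * c j)) * c i‖ ≤
        ∑ i ∈ s, (∏ j ∈ s.erase i, (M + |c j|)) * |c i| := fun a t ht => by
    refine (norm_sum_le _ _).trans (sum_le_sum fun i _ => ?_)
    rw [norm_mul, Real.norm_eq_abs, abs_prod, Real.norm_eq_abs]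
    exact mul_le_mul_of_nonneg_right
      (prod_le_prod (fun j _ => abs_nonneg _) fun j _ => hfactor a t ht j) (abs_nonneg _)
  have hmeas : ∀ t, Measurable fun a => ∏ i ∈ s, (φ i a + t * c i) := fun t =>
    Finset.measurable_prod s fun i _ => (hφ i).add_const _
  obtain ⟨-, h⟩ := hasDerivAt_integral_of_dominated_loc_of_deriv_le (μ := μ)
    (Metric.ball_mem_nhds 0 one_pos) (Eventually.of_forall fun t => (hmeas t).aestronglyMeasurable)
    (by simpa using integrable_finset_prod_of_abs_le s hφ hM)
    (Finset.measurable_sum s fun i _ => (Finset.measurable_prod _ fun j _ =>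
      (hφ j).add_const _).mul_const _).aestronglyMeasurable
    (ae_of_all _ hbound) (integrable_const _) (ae_of_all _ fun a t _ => hderiv a t)
  rwa [show ∫ a, ∑ i ∈ s, (∏ j ∈ s.erase i, (φ j a + 0 * c j)) * c i ∂μ =
      ∑ i ∈ s, (∫ a, ∏ j ∈ s.erase i, φ j a ∂μ) * c i by
    simp only [zero_mul, add_zero]
    rw [integral_finsetSum _ fun i _ => (integrable_finset_prod_of_abs_le _ hφ hM).mul_const _]
    simp only [integral_mul_const]] at h

end ProductIntegral

theorem HasDerivAt.nonneg_of_forall_pos_le {f : ℝ → ℝ} {f' : ℝ} (hf : HasDerivAt f f' 0)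
    (hmin : ∀ t > 0, f 0 ≤ f t) : 0 ≤ f' := by
  have hslope := (hasDerivAt_iff_tendsto_slope.1 hf).mono_left
    (nhdsWithin_mono 0 fun t (ht : t ∈ Set.Ioi 0) => ht.ne')
  refine ge_of_tendsto hslope (eventually_nhdsWithin_of_forall fun t (ht : 0 < t) => ?_)
  rw [slope_def_field]
  exact div_nonneg (by linarith [hmin t ht]) (by simpa using ht.le)

theorem eq_of_continuousAt_of_forall_pos_eq {β : Type*} [TopologicalSpace β] [T2Space β]
    {f g : ℝ → β} (hf : ContinuousAt f 0) (hg : ContinuousAt g 0)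
    (hfg : ∀ t > 0, f t = g t) : f 0 = g 0 :=
  tendsto_nhds_unique (hf.tendsto.mono_left (nhdsWithin_le_nhds (s := Set.Ioi 0)))
    ((hg.tendsto.mono_left nhdsWithin_le_nhds).congr'
      (eventually_nhdsWithin_of_forall fun t ht => (hfg t ht).symm))

theorem Finset.eq_of_forall_card_mul_le_sum {ι : Type*} {s : Finset ι} {b : ι → ℝ}
    (hb : ∀ i ∈ s, #s * b i ≤ ∑ j ∈ s, b j) {i j : ι} (hi : i ∈ s) (hj : j ∈ s) :
    b i = b j := by
  have hsum : ∑ i ∈ s, (∑ j ∈ s, b j - #s * b i) = 0 := by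
    rw [sum_sub_distrib, sum_const, ← mul_sum, nsmul_eq_mul, sub_self]
  have heq : ∀ i ∈ s, #s * b i = ∑ j ∈ s, b j := fun i hi => by
    linarith [(sum_eq_zero_iff_of_nonneg fun i hi => sub_nonneg.2 (hb i hi)).1 hsum i hi]
  exact mul_left_cancel₀ (Nat.cast_ne_zero.2 (card_ne_zero_of_mem hi))
    ((heq i hi).trans (heq j hj).symm)

section Graph

variable {V : Type}

noncomputable def kernelOnEdge (h : ℝ → ℝ → ℝ) (hsym : ∀ a b, h a b = h b a)
    (x : V → Set.Icc (0:ℝ) 1) (e : Sym2 V) : ℝ :=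
  Sym2.lift ⟨fun i j => h (x i) (x j), fun _ _ => hsym _ _⟩ e

theorem abs_kernelOnEdge_le {h : ℝ → ℝ → ℝ} (hsym : ∀ a b, h a b = h b a) {M : ℝ}
    (hM : ∀ a b, |h a b| ≤ M) (x : V → Set.Icc (0:ℝ) 1) (e : Sym2 V) :
    |kernelOnEdge h hsym x e| ≤ M := by
  induction e using Sym2.ind with
  | _ i j => exact hM _ _

theorem le_kernelOnEdge {h : ℝ → ℝ → ℝ} (hsym : ∀ a b, h a b = h b a) {δ : ℝ}
    (hδ : ∀ a b, δ ≤ h a b) (x : V → Set.Icc (0:ℝ) 1) (e : Sym2 V) :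
    δ ≤ kernelOnEdge h hsym x e := by
  induction e using Sym2.ind with
  | _ i j => exact hδ _ _

theorem kernelOnEdge_add_const (h : ℝ → ℝ → ℝ) (hsym : ∀ a b, h a b = h b a) (c : ℝ)
    (x : V → Set.Icc (0:ℝ) 1) (e : Sym2 V) :
    kernelOnEdge (fun a b => h a b + c) (fun a b => by rw [hsym a b]) x e =
      kernelOnEdge h hsym x e + c := by
  induction e using Sym2.ind with
  | _ i j => rfl

theorem measurable_kernelOnEdge {h : ℝ → ℝ → ℝ} (hsym : ∀ a b, h a b = h b a)
    (hm : Measurable (Function.uncurry h)) (e : Sym2 V) :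
    Measurable fun x : V → Set.Icc (0:ℝ) 1 => kernelOnEdge h hsym x e := by
  induction e using Sym2.ind with
  | _ i j =>
    exact hm.comp ((measurable_subtype_coe.comp (measurable_pi_apply i)).prodMk
      (measurable_subtype_coe.comp (measurable_pi_apply j)))

theorem tG_deleteEdges [Fintype V] (G : SimpleGraph V) (h : ℝ → ℝ → ℝ)
    (hsym : ∀ a b, h a b = h b a) (e : Sym2 V) :
    tG (G.deleteEdges {e}) h hsym =
      ∫ x, ∏ f ∈ G.edgeFinset.erase e, kernelOnEdge h hsym x f := by
  refine integral_congr_ae (ae_of_all _ fun x => prod_congr ?_ fun _ _ => rfl)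
  ext f
  simp [and_comm]

theorem hasDerivAt_tGm_add_mul [Fintype V] (G : SimpleGraph V) {h : ℝ → ℝ → ℝ}
    (hsym : ∀ a b, h a b = h b a) (hm : Measurable (Function.uncurry h)) {M : ℝ}
    (hM : ∀ a b, |h a b| ≤ M) (c : Sym2 V → ℝ) :
    HasDerivAt (fun t => tGm G (fun e a b => h a b + t * c e) fun e a b => by rw [hsym a b])
      (∑ e ∈ G.edgeFinset, tG (G.deleteEdges {e}) h hsym * c e) 0 := by
  simp_rw [tG_deleteEdges]
  refine (hasDerivAt_integral_prod_add_mul G.edgeFinset c (measurable_kernelOnEdge hsym hm)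
    fun e x => abs_kernelOnEdge_le hsym hM x e).congr_of_eventuallyEq
      (Eventually.of_forall fun t => integral_congr_ae
        (ae_of_all _ fun x => prod_congr rfl fun e _ => kernelOnEdge_add_const h hsym _ x e))

theorem hasDerivAt_tG_add_const [Fintype V] (G : SimpleGraph V) {h : ℝ → ℝ → ℝ}
    (hsym : ∀ a b, h a b = h b a) (hm : Measurable (Function.uncurry h)) {M : ℝ}
    (hM : ∀ a b, |h a b| ≤ M) :
    HasDerivAt (fun t => tG G (fun a b => h a b + t) fun a b => by rw [hsym a b])
      (∑ e ∈ G.edgeFinset, tG (G.deleteEdges {e}) h hsym) 0 := by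
  have h1 := hasDerivAt_tGm_add_mul G hsym hm hM fun _ => 1
  simp only [mul_one] at h1
  exact h1

theorem tG_pos_of_forall_le [Fintype V] (G : SimpleGraph V) {h : ℝ → ℝ → ℝ}
    (hsym : ∀ a b, h a b = h b a) (hm : Measurable (Function.uncurry h)) {M : ℝ}
    (hM : ∀ a b, |h a b| ≤ M) {δ : ℝ} (hδ : 0 < δ) (hδh : ∀ a b, δ ≤ h a b) :
    0 < tG G h hsym :=
  calc 0 < δ ^ #G.edgeFinset := pow_pos hδ _
    _ = ∫ _ : V → Set.Icc (0:ℝ) 1, δ ^ #G.edgeFinset := by simp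
    _ ≤ tG G h hsym := by
      refine integral_mono (integrable_const _) (integrable_finset_prod_of_abs_le _
        (measurable_kernelOnEdge hsym hm) (fun e x => abs_kernelOnEdge_le hsym hM x e))
        fun x => ?_
      rw [← prod_const]
      exact prod_le_prod (fun _ _ => hδ.le) fun e _ => le_kernelOnEdge hsym hδh x e

theorem prod_tG_add_mul_ite [Fintype V] (G : SimpleGraph V) {g : ℝ → ℝ → ℝ}
    (hg : ∀ a b, g a b = g b a) (t : ℝ) {e : Sym2 V} (he : e ∈ G.edgeFinset) :
    ∏ f ∈ G.edgeFinset, tG G (fun a b => g a b + t * if f = e then 1 else 0)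
        (fun a b => by rw [hg a b]) =
      tG G (fun a b => g a b + t) (fun a b => by rw [hg a b]) *
        tG G g hg ^ (#G.edgeFinset - 1) := by
  rw [← mul_prod_erase _ _ he, prod_congr rfl fun f hf => show _ = tG G g hg by
    simp only [if_neg (ne_of_mem_erase hf), mul_zero, add_zero], prod_const,
    card_erase_of_mem he]
  simp

def IsWeaklyNorming [Fintype V] (G : SimpleGraph V) : Prop :=
  ∀ (H : Sym2 V → ℝ → ℝ → ℝ) (hs : ∀ e a b, H e a b = H e b a),
    (∀ e, Measurable (Function.uncurry (H e))) → (∀ e, ∃ M, ∀ x y, |H e x y| ≤ M) →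
    (∀ e x y, 0 ≤ H e x y) →
    tGm G H hs ^ G.edgeFinset.card ≤ ∏ e ∈ G.edgeFinset, tG G (H e) (hs e)

theorem IsWeaklyNorming.card_mul_tG_deleteEdges_le_sum [Fintype V] {G : SimpleGraph V}
    (hG : IsWeaklyNorming G) {g : ℝ → ℝ → ℝ} (hg : ∀ a b, g a b = g b a)
    (hgm : Measurable (Function.uncurry g)) {M : ℝ} (hgM : ∀ a b, |g a b| ≤ M)
    (hg0 : ∀ a b, 0 ≤ g a b) (hpos : 0 < tG G g hg) {e : Sym2 V} (he : e ∈ G.edgeFinset) :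
    #G.edgeFinset * tG (G.deleteEdges {e}) g hg ≤
      ∑ f ∈ G.edgeFinset, tG (G.deleteEdges {f}) g hg := by
  let c : Sym2 V → ℝ := fun f => if f = e then 1 else 0
  let H : ℝ → Sym2 V → ℝ → ℝ → ℝ := fun t f a b => g a b + t * c f
  have hH : ∀ t f a b, H t f a b = H t f b a := fun t f a b => by simp only [H, hg a b]
  have hH0 : tGm G (H 0) (hH 0) = tG G g hg := by
    simp only [H, zero_mul, add_zero]
    rfl
  let F : ℝ → ℝ := fun t => tG G (fun a b => g a b + t) (fun a b => by rw [hg a b]) *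
    tG G g hg ^ (#G.edgeFinset - 1) - tGm G (H t) (hH t) ^ #G.edgeFinset
  have hF : HasDerivAt F ((∑ f ∈ G.edgeFinset, tG (G.deleteEdges {f}) g hg) *
      tG G g hg ^ (#G.edgeFinset - 1) - #G.edgeFinset * tG G g hg ^ (#G.edgeFinset - 1) *
        tG (G.deleteEdges {e}) g hg) 0 := by
    have hL : HasDerivAt (fun t => tGm G (H t) (hH t)) (tG (G.deleteEdges {e}) g hg) 0 :=
      (hasDerivAt_tGm_add_mul G hg hgm hgM c).congr_deriv (by simp [c, he])
    have hF' := ((hasDerivAt_tG_add_const G hg hgm hgM).mul_const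
      (tG G g hg ^ (#G.edgeFinset - 1))).sub (hL.pow #G.edgeFinset)
    rwa [hH0] at hF'
  have hFmin : ∀ t > 0, F 0 ≤ F t := by
    intro t ht
    have hF0 : F 0 = 0 := by
      simp only [F, hH0, add_zero]
      rw [mul_pow_sub_one (card_ne_zero_of_mem he), sub_self]
    have hnorm := hG (H t) (hH t) (fun f => hgm.add_const _)
      (fun f => ⟨M + |t * c f|, fun a b => (abs_add_le _ _).trans (add_le_add (hgM a b) le_rfl)⟩)
      (fun f a b => add_nonneg (hg0 a b)
        (mul_nonneg ht.le (by simp only [c]; split_ifs <;> norm_num)))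
    simpa only [F, hF0, sub_nonneg] using hnorm.trans_eq (prod_tG_add_mul_ite G hg t he)
  have hApow : 0 < tG G g hg ^ (#G.edgeFinset - 1) := pow_pos hpos _
  nlinarith [hF.nonneg_of_forall_pos_le hFmin]

end Graph

/-- key lemma: if `G` is weakly norming, then all single-edge deletions of `G`
give the same homomorphism density on every bounded measurable symmetric nonnegative kernel. -/
theorem deleted_densities_eq {V : Type} [Fintype V] (G : SimpleGraph V)
    (hwn : ∀ (H : Sym2 V → ℝ → ℝ → ℝ) (hs : ∀ e a b, H e a b = H e b a),
      (∀ e, Measurable (Function.uncurry (H e))) → (∀ e, ∃ M, ∀ x y, |H e x y| ≤ M) →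
      (∀ e x y, 0 ≤ H e x y) →
      tGm G H hs ^ G.edgeFinset.card ≤ ∏ e ∈ G.edgeFinset, tG G (H e) (hs e))
    (h : ℝ → ℝ → ℝ) (hsym : ∀ a b, h a b = h b a)
    (hmeas : Measurable (Function.uncurry h)) (hbdd : ∃ M, ∀ x y, |h x y| ≤ M)
    (hnonneg : ∀ x y, 0 ≤ h x y) :
    ∀ e₁ ∈ G.edgeSet, ∀ e₂ ∈ G.edgeSet,
      tG (G.deleteEdges {e₁}) h hsym = tG (G.deleteEdges {e₂}) h hsym := by
  intro e₁ he₁ e₂ he₂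
  obtain ⟨M, hM⟩ := hbdd
  rw [← SimpleGraph.mem_edgeFinset] at he₁ he₂
  have hshift : ∀ δ > 0,
      tG (G.deleteEdges {e₁}) (fun a b => h a b + δ) (fun a b => by rw [hsym a b]) =
        tG (G.deleteEdges {e₂}) (fun a b => h a b + δ) (fun a b => by rw [hsym a b]) := by
    intro δ hδ
    have hδs : ∀ a b, h a b + δ = h b a + δ := fun a b => by rw [hsym a b]
    have hδm : Measurable (Function.uncurry fun a b => h a b + δ) := hmeas.add_const δ
    have hδM : ∀ a b, |h a b + δ| ≤ M + δ := fun a b =>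
      (abs_add_le _ _).trans (add_le_add (hM a b) (abs_of_pos hδ).le)
    have hδh : ∀ a b, δ ≤ h a b + δ := fun a b => le_add_of_nonneg_left (hnonneg a b)
    have hpos := tG_pos_of_forall_le G hδs hδm hδM hδ hδh
    exact eq_of_forall_card_mul_le_sum (fun e he =>
      IsWeaklyNorming.card_mul_tG_deleteEdges_le_sum hwn hδs hδm hδM
        (fun a b => hδ.le.trans (hδh a b)) hpos he) he₁ he₂
  have hcont : ∀ e, ContinuousAt (fun δ => tG (G.deleteEdges {e}) (fun a b => h a b + δ)
      (fun a b => by rw [hsym a b])) 0 := fun e =>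
    (hasDerivAt_tG_add_const _ hsym hmeas hM).continuousAt
  simpa using eq_of_continuousAt_of_forall_pos_eq (hcont e₁) (hcont e₂) hshift
end
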